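/- Let U ∈ ℝ^{w×r} have orthonormal columns u₁, …, u_r, let σ₁, …, σ_r ≥ c_σ for some constant c_σ > 0, and let E ∈ ℝ^{w×r} have columns e₁, …, e_r with ‖e_i‖₂ < σ_i for every i. Define σ̂_i = ‖σ_i·u_i + e_i‖₂ > 0 and the diagonal matrices S = diag(σ₁, …, σ_r), Ŝ = diag(σ̂₁, …, σ̂_r). Then ‖Ŝ⁻¹ − S⁻¹‖_F ≤ ‖E‖_F / (c_σ · min_{1≤i≤r} (σ_i − ‖e_i‖₂)). -/

import Mathlib

open Matrix

/-- Euclidean norm of a vector in ℝ^n. -/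
noncomputable def vnorm {n : ℕ} (v : Fin n → ℝ) : ℝ :=
  Real.sqrt (∑ i, (v i) ^ 2)

/-- Frobenius norm of a real matrix. -/
noncomputable def frob {m n : ℕ} (M : Matrix (Fin m) (Fin n) ℝ) : ℝ :=
  Real.sqrt (∑ i, ∑ j, (M i j) ^ 2)

/-!
Write `eᵢ = ‖E_{·i}‖₂` and `m = minᵢ (σᵢ - eᵢ)`. Since the columns of `U` are unit vectors,
`‖σᵢuᵢ‖₂ = σᵢ`, so the reverse triangle inequality gives `|σ̂ᵢ - σᵢ| ≤ eᵢ`; in particular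
`σ̂ᵢ ≥ σᵢ - eᵢ ≥ m > 0`. Hence `|σ̂ᵢ⁻¹ - σᵢ⁻¹| = |σᵢ - σ̂ᵢ| / (σ̂ᵢσᵢ) ≤ eᵢ / (c_σ m)`, and taking the
Euclidean norm of these entrywise bounds over `i` yields `‖E‖_F / (c_σ m)`, because the Frobenius
norm of `E` is the Euclidean norm of its vector of column norms.
-/

section vnorm

variable {n : ℕ}

lemma vnorm_eq_norm_toLp (v : Fin n → ℝ) : vnorm v = ‖WithLp.toLp 2 v‖ := by
  simp [EuclideanSpace.norm_eq, vnorm, Real.norm_eq_abs, sq_abs]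

lemma vnorm_nonneg (v : Fin n → ℝ) : 0 ≤ vnorm v :=
  Real.sqrt_nonneg _

lemma vnorm_const_mul (a : ℝ) (v : Fin n → ℝ) : vnorm (fun k => a * v k) = |a| * vnorm v := by
  rw [vnorm_eq_norm_toLp, vnorm_eq_norm_toLp, ← Real.norm_eq_abs, ← norm_smul]
  rfl

lemma abs_vnorm_add_sub_vnorm_le (x y : Fin n → ℝ) :
    |vnorm (fun k => x k + y k) - vnorm x| ≤ vnorm y := by
  have h := abs_norm_sub_norm_le (WithLp.toLp 2 x + WithLp.toLp 2 y) (WithLp.toLp 2 x)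
  rw [add_sub_cancel_left] at h
  rw [vnorm_eq_norm_toLp, vnorm_eq_norm_toLp, vnorm_eq_norm_toLp]
  exact h

lemma vnorm_le_vnorm_of_abs_le {x y : Fin n → ℝ} (h : ∀ i, |x i| ≤ y i) : vnorm x ≤ vnorm y :=
  Real.sqrt_le_sqrt <| Finset.sum_le_sum fun i _ =>
    sq_abs (x i) ▸ pow_le_pow_left₀ (abs_nonneg _) (h i) 2

lemma vnorm_div_const (v : Fin n → ℝ) {c : ℝ} (hc : 0 ≤ c) :
    vnorm (fun i => v i / c) = vnorm v / c := by
  simp_rw [div_eq_inv_mul, vnorm_const_mul, abs_of_nonneg (inv_nonneg.mpr hc)]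

end vnorm

lemma vnorm_col_eq_one_of_transpose_mul_self_eq_one {w r : ℕ} {U : Matrix (Fin w) (Fin r) ℝ}
    (hU : Uᵀ * U = 1) (i : Fin r) : vnorm (fun k => U k i) = 1 := by
  have hsum : ∑ k, U k i ^ 2 = 1 := by
    simpa [Matrix.mul_apply, sq] using congrFun (congrFun hU i) i
  rw [vnorm, hsum, Real.sqrt_one]

lemma frob_diagonal {n : ℕ} (d : Fin n → ℝ) : frob (diagonal d) = vnorm d := by
  unfold frob vnorm
  congr 1
  refine Finset.sum_congr rfl fun i _ => ?_
  rw [Finset.sum_eq_single i (fun j _ hj => by simp [diagonal_apply_ne _ hj.symm]) (by simp)]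
  simp

lemma frob_eq_vnorm_colNorms {m n : ℕ} (M : Matrix (Fin m) (Fin n) ℝ) :
    frob M = vnorm (fun j => vnorm (fun i => M i j)) := by
  rw [frob, vnorm, Finset.sum_comm]
  congr 1
  refine Finset.sum_congr rfl fun j _ => ?_
  rw [vnorm, Real.sq_sqrt (Finset.sum_nonneg fun _ _ => sq_nonneg _)]

lemma abs_inv_sub_inv_le_div_mul {s σ e c m : ℝ} (hc : 0 < c) (hcσ : c ≤ σ) (hm : 0 < m)
    (hms : m ≤ s) (hs : |s - σ| ≤ e) : |s⁻¹ - σ⁻¹| ≤ e / (c * m) := by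
  have hs₀ : 0 < s := hm.trans_le hms
  have hσ₀ : 0 < σ := hc.trans_le hcσ
  rw [inv_sub_inv hs₀.ne' hσ₀.ne', abs_div, abs_of_pos (mul_pos hs₀ hσ₀), abs_sub_comm]
  have hcm : c * m ≤ s * σ := by nlinarith
  exact div_le_div₀ ((abs_nonneg _).trans hs) hs (mul_pos hc hm) hcm

theorem swicca_reciprocal_singular_value_matrix_bound_general {w r : ℕ}
    (U E : Matrix (Fin w) (Fin r) ℝ) (hU : Uᵀ * U = 1)
    (σ : Fin r → ℝ) (cσ : ℝ) (hcσ : 0 < cσ) (hσ : ∀ i, cσ ≤ σ i)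
    (hE : ∀ i, vnorm (fun k => E k i) < σ i) :
    frob (Matrix.diagonal (fun i => (vnorm (fun k => σ i * U k i + E k i))⁻¹) -
        Matrix.diagonal (fun i => (σ i)⁻¹)) ≤
      frob E / (cσ * ⨅ i, (σ i - vnorm (fun k => E k i))) := by
  set e : Fin r → ℝ := fun i => vnorm (fun k => E k i)
  set m : ℝ := ⨅ i, (σ i - e i)
  have hperturb : ∀ i, |vnorm (fun k => σ i * U k i + E k i) - σ i| ≤ e i := fun i => by
    have hσ₀ : 0 < σ i := (vnorm_nonneg _).trans_lt (hE i)
    simpa [vnorm_const_mul, vnorm_col_eq_one_of_transpose_mul_self_eq_one hU, abs_of_pos hσ₀]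
      using abs_vnorm_add_sub_vnorm_le (fun k => σ i * U k i) (fun k => E k i)
  have hm₀ : 0 ≤ m := Real.iInf_nonneg fun i => sub_nonneg.mpr (hE i).le
  have hentry : ∀ i, |(vnorm (fun k => σ i * U k i + E k i))⁻¹ - (σ i)⁻¹| ≤ e i / (cσ * m) := by
    intro i
    have : Nonempty (Fin r) := ⟨i⟩
    obtain ⟨j, hj⟩ := exists_eq_ciInf_of_finite (f := fun i => σ i - e i)
    have hm : 0 < m := (sub_pos.mpr (hE j)).trans_eq hj
    have hmi : m ≤ σ i - e i := ciInf_le (Set.finite_range _).bddBelow i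
    refine abs_inv_sub_inv_le_div_mul hcσ (hσ i) hm ?_ (hperturb i)
    linarith [(abs_le.mp (hperturb i)).1]
  rw [diagonal_sub, frob_diagonal, frob_eq_vnorm_colNorms, ← vnorm_div_const _ (by positivity)]
  exact vnorm_le_vnorm_of_abs_le hentry

/-- Aggregate reciprocal singular-value bound from the error analysis of the
SWICCA algorithm (Theorem 2): with `σ̂_i = ‖σ_i·u_i + e_i‖₂`,
`‖Ŝ⁻¹ − S⁻¹‖_F ≤ ‖E‖_F / (c_σ · min_i (σ_i − ‖e_i‖₂))`. -/
theorem swicca_reciprocal_singular_value_matrix_bound {w r : ℕ} (hr : 0 < r)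
    (U E : Matrix (Fin w) (Fin r) ℝ) (hU : Uᵀ * U = 1)
    (σ : Fin r → ℝ) (cσ : ℝ) (hcσ : 0 < cσ) (hσ : ∀ i, cσ ≤ σ i)
    (hE : ∀ i, vnorm (fun k => E k i) < σ i) :
    frob (Matrix.diagonal (fun i => (vnorm (fun k => σ i * U k i + E k i))⁻¹) -
        Matrix.diagonal (fun i => (σ i)⁻¹)) ≤
      frob E / (cσ * ⨅ i, (σ i - vnorm (fun k => E k i))) :=
  swicca_reciprocal_singular_value_matrix_bound_general U E hU σ cσ hcσ hσ hE
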